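/- For every n ≥ 1, the n×n matrix B = (b_{kj}) with entries b_{kj} = j! · (n − j + k − 1)! (indices k,j ∈ {1,…,n}) is nonsingular, i.e., has non-zero determinant. -/

import Mathlib

/-!
Since `(a + b)! = a! b! C(a + b, a)` and, by Vandermonde, `C(a + b, a) = ∑ₘ C(a, m) C(b, m)`,
the Hankel matrix `((i + j)!)` factors as `D P Pᵀ D` with `D = diag(i!)` and `P = (C(i, j))` the
unitriangular Pascal matrix; hence its determinant is `∏ i!²`. The matrix of the theorem is this
Hankel matrix with its columns reversed and then scaled by `(j + 1)!`.
-/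

open Finset Matrix Nat

theorem Nat.sum_range_choose_mul_choose_of_lt {a n : ℕ} (b : ℕ) (h : a < n) :
    ∑ m ∈ range n, a.choose m * b.choose m = (a + b).choose a := by
  rw [← sum_range_add_sum_Ico _ h, add_choose_eq, sum_antidiagonal_eq_sum_range_succ_mk,
    ← sum_range_reflect]
  have tail : ∑ m ∈ Ico (a + 1) n, a.choose m * b.choose m = 0 :=
    sum_eq_zero fun m hm => by rw [choose_eq_zero_of_lt (mem_Ico.1 hm).1, zero_mul]
  rw [tail, add_zero]
  refine sum_congr rfl fun m hm => ?_
  have hm : m ≤ a := Nat.lt_succ_iff.1 (mem_range.1 hm)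
  rw [show a + 1 - 1 - m = a - m by omega, choose_symm hm]

namespace Matrix

variable (R : Type*) [CommRing R] (n : ℕ)

def pascal : Matrix (Fin n) (Fin n) R :=
  of fun i j => (i.val.choose j : R)

theorem det_pascal : (pascal R n).det = 1 := by
  rw [det_of_isLowerTriangular _ fun i j hij => ?_]
  · simp [pascal]
  · have hij : (i : ℕ) < j := OrderDual.toDual_lt_toDual.1 hij
    rw [pascal, of_apply, choose_eq_zero_of_lt hij, cast_zero]

theorem pascal_mul_transpose_apply (i j : Fin n) :
    (pascal R n * (pascal R n)ᵀ) i j = ((i + j : ℕ).choose i : R) := by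
  simp only [mul_apply, transpose_apply, pascal, of_apply]
  rw [Fin.sum_univ_eq_sum_range (fun m => (i.val.choose m : R) * (j.val.choose m)),
    ← sum_range_choose_mul_choose_of_lt j i.2]
  push_cast
  rfl

theorem of_factorial_add_eq :
    (of fun i j : Fin n => ((i + j : ℕ)! : R)) =
      diagonal (fun i : Fin n => (i.val ! : R)) * (pascal R n * (pascal R n)ᵀ) *
        diagonal (fun j : Fin n => (j.val ! : R)) := by
  ext i j
  rw [mul_diagonal, diagonal_mul, pascal_mul_transpose_apply, of_apply,
    ← add_choose_mul_factorial_mul_factorial, choose_symm_add]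
  push_cast
  ring

theorem det_of_factorial_add :
    (of fun i j : Fin n => ((i + j : ℕ)! : R)).det = ∏ i : Fin n, (i.val ! : R) ^ 2 := by
  rw [of_factorial_add_eq, det_mul, det_mul, det_mul, det_transpose, det_pascal, det_diagonal,
    mul_one, mul_one, ← prod_mul_distrib]
  simp only [sq]

end Matrix

theorem voting_coefficient_matrix_det_ne_zero (n : ℕ) :
    Matrix.det (Matrix.of fun k j : Fin n =>
      ((Nat.factorial (j.1 + 1) * Nat.factorial (n - (j.1 + 1) + k.1) : ℕ) : ℚ)) ≠ 0 := by
  have factor : (Matrix.of fun k j : Fin n =>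
      ((Nat.factorial (j.1 + 1) * Nat.factorial (n - (j.1 + 1) + k.1) : ℕ) : ℚ)) =
      (of fun i j : Fin n => ((i + j : ℕ)! : ℚ)).submatrix id Fin.revPerm *
        diagonal fun j : Fin n => ((j.val + 1)! : ℚ) := by
    ext k j
    simp [mul_diagonal, Fin.val_rev, add_comm, mul_comm]
  rw [factor, det_mul, det_permute', det_of_factorial_add, det_diagonal]
  have hsign : ((Equiv.Perm.sign (Fin.revPerm : Equiv.Perm (Fin n)) : ℤ) : ℚ) ≠ 0 :=
    Int.cast_ne_zero.2 (Units.ne_zero _)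
  have hfact := fun m : ℕ => (Nat.cast_ne_zero (R := ℚ)).2 (factorial_ne_zero m)
  exact mul_ne_zero (mul_ne_zero hsign (prod_ne_zero_iff.2 fun i _ => pow_ne_zero _ (hfact _)))
    (prod_ne_zero_iff.2 fun j _ => hfact _)
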